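/- Let n be a natural number and let a, b : Fin n → ℝ satisfy a i > 0 and b i > 0 for every i, Σᵢ a i = Σᵢ b i = N with N > 0, and |b i − a i| < a i for every i. Writing Δ i = b i − a i, one has | (1/N)·Σᵢ (a i)·log₂((a i)/(b i)) − (1/(2·N·ln 2))·Σᵢ (Δ i)²/(a i) | ≤ (1/(N·ln 2))·Σᵢ (a i)·|Δ i|³/(3·(a i − |Δ i|)³). -/

import Mathlib

/-!
Put `x = (a - b) / a` in each bin, so that `a log (a / b) = -a log (1 - x)`. Subtracting the
quadratic Taylor polynomial of `log (1 - x)` leaves the χ²-term, a linear term `b - a` that sums to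
zero because both histograms hold `N` samples, and `a` times a remainder. Comparing the power series
of `log (1 - x)` beyond degree two with a geometric series bounds that remainder by
`|x|³ / (3 (1 - |x|)) ≤ |x|³ / (3 (1 - |x|)³)`, which is the stated per-bin bound after rescaling.
-/

open Real Finset

theorem abs_log_one_sub_add_le {x : ℝ} (h : |x| < 1) :
    |log (1 - x) + x + x ^ 2 / 2| ≤ |x| ^ 3 / (3 * (1 - |x|)) := by
  have htail := (hasSum_nat_add_iff' 2).2 (hasSum_pow_div_log_of_abs_lt_one h)
  have hgeom := (hasSum_geometric_of_lt_one (abs_nonneg x) h).mul_left (|x| ^ 3 / 3)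
  have hterm (n : ℕ) : ‖x ^ (n + 2 + 1) / ((n + 2 : ℕ) + 1 : ℝ)‖ ≤ |x| ^ 3 / 3 * |x| ^ n := by
    rw [norm_div, norm_pow, Real.norm_eq_abs, Real.norm_of_nonneg (by positivity),
      div_mul_eq_mul_div, ← pow_add, add_comm 3 n]
    gcongr
    push_cast
    linarith [(n.cast_nonneg : (0 : ℝ) ≤ n)]
  have := htail.norm_le_of_bounded hgeom hterm
  rw [Real.norm_eq_abs, sum_range_succ, sum_range_one] at this
  rw [← abs_neg]
  convert this using 2
  · norm_num; ring
  · rw [mul_comm 3, ← div_div]; ring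

theorem abs_mul_log_div_add_sub_le {a b : ℝ} (ha : 0 < a) (hab : |b - a| < a) :
    |a * log (a / b) + (b - a) - (b - a) ^ 2 / (2 * a)|
      ≤ a * |b - a| ^ 3 / (3 * (a - |b - a|) ^ 3) := by
  set x := (a - b) / a with hx
  have hxa : |x| = |b - a| / a := by rw [hx, abs_div, abs_sub_comm, abs_of_pos ha]
  have hx1 : |x| < 1 := by rwa [hxa, div_lt_one ha]
  have hgap : 0 < 1 - |x| := by linarith
  have hrem : a * log (a / b) + (b - a) - (b - a) ^ 2 / (2 * a)
      = -(a * (log (1 - x) + x + x ^ 2 / 2)) := by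
    have h1x : 1 - x = (a / b)⁻¹ := by rw [hx]; field_simp; ring
    rw [h1x, log_inv, hx]
    field_simp
    ring
  calc |a * log (a / b) + (b - a) - (b - a) ^ 2 / (2 * a)|
      = a * |log (1 - x) + x + x ^ 2 / 2| := by rw [hrem, abs_neg, abs_mul, abs_of_pos ha]
    _ ≤ a * (|x| ^ 3 / (3 * (1 - |x|))) := by gcongr; exact abs_log_one_sub_add_le hx1
    _ ≤ a * (|x| ^ 3 / (3 * (1 - |x|) ^ 3)) := by
        gcongr
        exact pow_le_of_le_one hgap.le (by linarith [abs_nonneg x]) (by norm_num)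
    _ = a * |b - a| ^ 3 / (3 * (a - |b - a|) ^ 3) := by
        rw [hxa, one_sub_div ha.ne', div_pow, div_pow]
        field_simp

theorem klDiv_sub_chiSq_eq_sum_remainder {ι : Type*} (s : Finset ι) (a b : ι → ℝ) (N : ℝ)
    (hab : ∑ i ∈ s, a i = ∑ i ∈ s, b i) :
    (1 / N) * ∑ i ∈ s, a i * logb 2 (a i / b i)
        - (1 / (2 * N * log 2)) * ∑ i ∈ s, (b i - a i) ^ 2 / a i
      = (1 / (N * log 2)) *
          ∑ i ∈ s, (a i * log (a i / b i) + (b i - a i) - (b i - a i) ^ 2 / (2 * a i)) := by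
  have hΔ : ∑ i ∈ s, (b i - a i) = 0 := by rw [sum_sub_distrib, hab, sub_self]
  have hlogb :
      ∑ i ∈ s, a i * logb 2 (a i / b i) = (∑ i ∈ s, a i * log (a i / b i)) / log 2 := by
    simp only [logb, mul_div_assoc, sum_div]
  have hhalf : ∑ i ∈ s, (b i - a i) ^ 2 / (2 * a i) = (∑ i ∈ s, (b i - a i) ^ 2 / a i) / 2 := by
    simp only [sum_div, div_div, mul_comm]
  rw [sum_sub_distrib, sum_add_distrib, hΔ, hlogb, hhalf]
  ring

theorem stmt5_general (n : ℕ) (a b : Fin n → ℝ) (N : ℝ)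
    (ha : ∀ i, 0 < a i)
    (hsa : ∑ i, a i = N) (hsb : ∑ i, b i = N)
    (hclose : ∀ i, |b i - a i| < a i) :
    |(1 / N) * ∑ i, a i * Real.logb 2 (a i / b i)
        - (1 / (2 * N * Real.log 2)) * ∑ i, (b i - a i) ^ 2 / a i|
      ≤ (1 / (N * Real.log 2)) * ∑ i, a i * |b i - a i| ^ 3 / (3 * (a i - |b i - a i|) ^ 3) := by
  have hN : 0 ≤ N := hsa ▸ sum_nonneg fun i _ => (ha i).le
  have hlog2 : 0 < log 2 := log_pos one_lt_two
  rw [klDiv_sub_chiSq_eq_sum_remainder _ a b N (hsa.trans hsb.symm), abs_mul,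
    abs_of_nonneg (by positivity)]
  gcongr
  exact (abs_sum_le_sum_abs _ _).trans
    (sum_le_sum fun i _ => abs_mul_log_div_add_sub_le (ha i) (hclose i))

theorem stmt5 (n : ℕ) (a b : Fin n → ℝ) (N : ℝ)
    (ha : ∀ i, 0 < a i) (hb : ∀ i, 0 < b i)
    (hsa : ∑ i, a i = N) (hsb : ∑ i, b i = N) (hN : 0 < N)
    (hclose : ∀ i, |b i - a i| < a i) :
    |(1 / N) * ∑ i, a i * Real.logb 2 (a i / b i)
        - (1 / (2 * N * Real.log 2)) * ∑ i, (b i - a i) ^ 2 / a i|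
      ≤ (1 / (N * Real.log 2)) * ∑ i, a i * |b i - a i| ^ 3 / (3 * (a i - |b i - a i|) ^ 3) :=
  stmt5_general n a b N ha hsa hsb hclose
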